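/- arXiv:2204.06759 — 7 statements merged into one kernel-verified Lean document; each statement's English description precedes it below -/
import Mathlib

section
/- Let n, p, q be natural numbers with q ≥ 2, let b : Fin n → Fin p be a block assignment map, and let c : Fin p → Fin q be any map that merges the blocks of b into the coarser blocks of c ∘ b. If a real symmetric n×n matrix A belongs to FW_b, then A belongs to FW_{c∘b}; that is, the cone of block factor-width-two matrices grows as the partition becomes coarser. -/
open Matrix Finset

/-- `A` is block factor-width-two w.r.t. the block assignment map `b`:
`A = ∑_{k<l} Q k l` with each `Q k l` positive semidefinite and supported on blocks `k`, `l`. -/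
def memFW {n p : ℕ} (b : Fin n → Fin p) (A : Matrix (Fin n) (Fin n) ℝ) : Prop :=
  ∃ Q : Fin p → Fin p → Matrix (Fin n) (Fin n) ℝ,
    (∀ k l : Fin p, k < l → (Q k l).PosSemidef) ∧
    (∀ k l : Fin p, k < l → ∀ i j : Fin n,
      (b i ≠ k ∧ b i ≠ l) ∨ (b j ≠ k ∧ b j ≠ l) → Q k l i j = 0) ∧
    A = ∑ k : Fin p, ∑ l ∈ Finset.Ioi k, Q k l

/-- The cone `FW_b(V) = { Vᵀ Q V : Q ∈ FW_b }`. -/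
def memFWV {n p : ℕ} (b : Fin n → Fin p) (V M : Matrix (Fin n) (Fin n) ℝ) : Prop :=
  ∃ Q, memFW b Q ∧ M = Vᵀ * Q * V

/-! `FW_b` is the additive submonoid generated by the PSD matrices supported on two blocks
`b⁻¹{k, l}`, `k < l`. Each such generator is supported on the coarse blocks `c k`, `c l`, which
lie in some pair `k' < l'` of coarse blocks (if `c k = c l`, pair it with any other block; this
needs `q ≥ 2`), so it is a generator of `FW_{c∘b}`. -/

def Matrix.IsSupportedOn {ι R : Type*} [Zero R] (M : Matrix ι ι R) (s : Set ι) : Prop :=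
  ∀ i j, i ∉ s ∨ j ∉ s → M i j = 0

theorem Matrix.IsSupportedOn.mono {ι R : Type*} [Zero R] {M : Matrix ι ι R} {s t : Set ι}
    (h : M.IsSupportedOn s) (hst : s ⊆ t) : M.IsSupportedOn t :=
  fun i j hij => h i j (hij.imp (mt (@hst i)) (mt (@hst j)))

theorem exists_lt_pair_superset {α : Type*} [LinearOrder α] [Nontrivial α] (a d : α) :
    ∃ k l : α, k < l ∧ ({a, d} : Set α) ⊆ {k, l} := by
  obtain ⟨e, hea, hd⟩ : ∃ e, e ≠ a ∧ d ∈ ({a, e} : Set α) := by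
    by_cases hda : d = a
    · obtain ⟨e, he⟩ := exists_ne a
      exact ⟨e, he, by simp [hda]⟩
    · exact ⟨d, hda, by simp⟩
  have hsub : ({a, d} : Set α) ⊆ {a, e} := Set.insert_subset_iff.2 ⟨by simp, by simpa using hd⟩
  rcases hea.lt_or_gt with h | h
  · exact ⟨e, a, h, hsub.trans (Set.pair_comm a e).le⟩
  · exact ⟨a, e, h, hsub⟩

section

variable {n p : ℕ} (b : Fin n → Fin p)

theorem isSupportedOn_preimage_pair_iff (k l : Fin p) (M : Matrix (Fin n) (Fin n) ℝ) :
    M.IsSupportedOn (b ⁻¹' {k, l}) ↔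
      ∀ i j : Fin n, (b i ≠ k ∧ b i ≠ l) ∨ (b j ≠ k ∧ b j ≠ l) → M i j = 0 := by
  simp [Matrix.IsSupportedOn]

def fwCone : AddSubmonoid (Matrix (Fin n) (Fin n) ℝ) where
  carrier := {A | memFW b A}
  zero_mem' := ⟨0, fun _ _ _ => PosSemidef.zero, fun _ _ _ _ _ _ => rfl, by simp⟩
  add_mem' := by
    rintro _ _ ⟨Q, hQ, hQs, rfl⟩ ⟨Q', hQ', hQs', rfl⟩
    refine ⟨Q + Q', fun k l hkl => (hQ k l hkl).add (hQ' k l hkl), fun k l hkl i j hij => ?_, ?_⟩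
    · simp [hQs k l hkl i j hij, hQs' k l hkl i j hij]
    · simp [Finset.sum_add_distrib]

theorem mem_fwCone {A : Matrix (Fin n) (Fin n) ℝ} : A ∈ fwCone b ↔ memFW b A := Iff.rfl

variable {b}

theorem memFW_of_isSupportedOn {k l : Fin p} (hkl : k < l) {M : Matrix (Fin n) (Fin n) ℝ}
    (hM : M.PosSemidef) (hs : M.IsSupportedOn (b ⁻¹' {k, l})) : memFW b M := by
  refine ⟨fun k' l' => if (k', l') = (k, l) then M else 0, fun k' l' _ => ?_,
    fun k' l' _ => ?_, ?_⟩
  · dsimp only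
    split_ifs
    exacts [hM, PosSemidef.zero]
  · rw [← isSupportedOn_preimage_pair_iff]
    dsimp only
    split_ifs with h
    · obtain ⟨rfl, rfl⟩ := Prod.mk.inj h
      exact hs
    · exact fun _ _ _ => rfl
  · simp [ite_and, Finset.sum_ite_eq', hkl]

end

theorem memFW_coarser_general {n p q : ℕ} (hq : 2 ≤ q) (b : Fin n → Fin p) (c : Fin p → Fin q)
    (A : Matrix (Fin n) (Fin n) ℝ) (h : memFW b A) :
    memFW (c ∘ b) A := by
  have : Nontrivial (Fin q) := Fin.nontrivial_iff_two_le.2 hq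
  obtain ⟨Q, hpsd, hsupp, rfl⟩ := h
  refine (mem_fwCone _).1 (sum_mem fun k _ => sum_mem fun l hl => ?_)
  obtain ⟨k', l', hlt, hsub⟩ := exists_lt_pair_superset (c k) (c l)
  have hpre : b ⁻¹' {k, l} ⊆ (c ∘ b) ⁻¹' {k', l'} :=
    Set.preimage_mono (Set.image_subset_iff.1 (by rwa [Set.image_pair]))
  exact memFW_of_isSupportedOn hlt (hpsd k l (mem_Ioi.1 hl))
    (((isSupportedOn_preimage_pair_iff b k l _).2 (hsupp k l (mem_Ioi.1 hl))).mono hpre)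

theorem memFW_coarser {n p q : ℕ} (hq : 2 ≤ q) (b : Fin n → Fin p) (c : Fin p → Fin q)
    (A : Matrix (Fin n) (Fin n) ℝ) (hA : A.IsSymm) (h : memFW b A) :
    memFW (c ∘ b) A :=
  memFW_coarser_general hq b c A h
end

section
/- Let n, p be natural numbers with p ≥ 2 and b : Fin n → Fin p a block assignment map. If A is a real symmetric n×n scaled diagonally dominant matrix (i.e. there exists a diagonal matrix D with strictly positive diagonal entries such that DAD is diagonally dominant with nonnegative diagonal), then A belongs to FW_b. In particular SDD_n ⊆ FW_b for every block partition with at least two blocks. -/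
/-!
If `M = D A D` is diagonally dominant, then `M` is a nonnegative diagonal matrix plus, for each
off-diagonal entry `c = M i j`, the rank-one matrix `|c|/2 • v vᵀ` with `v = eᵢ + sign(c) eⱼ`.
Each of these pieces is positive semidefinite and supported on rows and columns `{i, j}`, which
meet at most two blocks; as `p ≥ 2`, any one or two blocks can be completed to a pair `k < l`, so
each piece lies in `FW_b`. Finally `FW_b` is closed under sums and under diagonal congruence, so
`A = D⁻¹ M D⁻¹` lies in it as well.
-/

open Matrix Finset

/-- `M` is diagonally dominant with nonnegative diagonal. -/
def IsDD {n : ℕ} (M : Matrix (Fin n) (Fin n) ℝ) : Prop :=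
  ∀ i : Fin n, ∑ j ∈ Finset.univ.erase i, |M i j| ≤ M i i

/-- `A` is scaled diagonally dominant: `DAD` is DD for some positive diagonal `D`. -/
def IsSDD {n : ℕ} (A : Matrix (Fin n) (Fin n) ℝ) : Prop :=
  ∃ d : Fin n → ℝ, (∀ i, 0 < d i) ∧
    IsDD (Matrix.diagonal d * A * Matrix.diagonal d)

theorem exists_lt_and_mem_pair {α : Type*} [LinearOrder α] [Nontrivial α] (x y : α) :
    ∃ k l : α, k < l ∧ (x = k ∨ x = l) ∧ (y = k ∨ y = l) := by
  rcases lt_trichotomy x y with h | rfl | h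
  · exact ⟨x, y, h, by simp⟩
  · obtain ⟨z, hz⟩ := exists_ne x
    rcases hz.lt_or_gt with h | h
    · exact ⟨z, x, h, by simp⟩
    · exact ⟨x, z, h, by simp⟩
  · exact ⟨y, x, h, by simp⟩

section BlockFactorWidthTwo

variable {n p : ℕ} (b : Fin n → Fin p)

theorem memFW_zero : memFW b 0 :=
  ⟨0, fun _ _ _ => PosSemidef.zero, fun _ _ _ _ _ _ => rfl, by simp⟩

theorem memFW.add {A B : Matrix (Fin n) (Fin n) ℝ} (hA : memFW b A) (hB : memFW b B) :
    memFW b (A + B) := by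
  obtain ⟨Q, hQ, hQ0, rfl⟩ := hA
  obtain ⟨R, hR, hR0, rfl⟩ := hB
  refine ⟨Q + R, fun k l hkl => (hQ k l hkl).add (hR k l hkl), fun k l hkl i j h => ?_, ?_⟩
  · simp [hQ0 k l hkl i j h, hR0 k l hkl i j h]
  · simp only [Pi.add_apply, Finset.sum_add_distrib]

theorem memFW_sum {ι : Type*} (s : Finset ι) {A : ι → Matrix (Fin n) (Fin n) ℝ}
    (h : ∀ x ∈ s, memFW b (A x)) : memFW b (∑ x ∈ s, A x) :=
  Finset.sum_induction A (memFW b) (fun _ _ => memFW.add b) (memFW_zero b) h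

theorem memFW_of_posSemidef_of_blocks {k l : Fin p} (hkl : k < l)
    {P : Matrix (Fin n) (Fin n) ℝ} (hP : P.PosSemidef)
    (hP0 : ∀ i j, (b i ≠ k ∧ b i ≠ l) ∨ (b j ≠ k ∧ b j ≠ l) → P i j = 0) : memFW b P := by
  refine ⟨fun k' l' => if k' = k ∧ l' = l then P else 0, fun k' l' _ => ?_,
    fun k' l' _ i j h => ?_, ?_⟩
  · dsimp only
    split_ifs
    exacts [hP, PosSemidef.zero]
  · dsimp only
    split_ifs with hk
    · obtain ⟨rfl, rfl⟩ := hk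
      exact hP0 i j h
    · rfl
  · simp [ite_and, hkl]

theorem memFW_of_posSemidef_of_pair (hp : 2 ≤ p) {P : Matrix (Fin n) (Fin n) ℝ}
    (hP : P.PosSemidef) (i j : Fin n)
    (hP0 : ∀ s t, P s t ≠ 0 → (s = i ∨ s = j) ∧ (t = i ∨ t = j)) : memFW b P := by
  have : Nontrivial (Fin p) := Fin.nontrivial_iff_two_le.mpr hp
  obtain ⟨k, l, hkl, hi, hj⟩ := exists_lt_and_mem_pair (b i) (b j)
  refine memFW_of_posSemidef_of_blocks b hkl hP fun s t hst => ?_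
  by_contra h
  obtain ⟨hs | hs, ht | ht⟩ := hP0 s t h <;> subst hs ht <;> tauto

theorem memFW_diagonal (hp : 2 ≤ p) {w : Fin n → ℝ} (hw : 0 ≤ w) : memFW b (diagonal w) := by
  rw [← sum_single_eq_diagonal]
  refine memFW_sum b _ fun i _ => memFW_of_posSemidef_of_pair b hp ?_ i i fun s t h => ?_
  · rw [← diagonal_single]
    exact .diagonal (Pi.single_nonneg.mpr (hw i))
  · rw [single_apply] at h
    aesop

theorem memFW.diagonal_mul_mul_diagonal {A : Matrix (Fin n) (Fin n) ℝ} (hA : memFW b A)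
    (e : Fin n → ℝ) : memFW b (diagonal e * A * diagonal e) := by
  obtain ⟨Q, hQ, hQ0, rfl⟩ := hA
  refine ⟨fun k l => diagonal e * Q k l * diagonal e, fun k l hkl => ?_,
    fun k l hkl i j h => ?_, ?_⟩
  · simpa using (hQ k l hkl).mul_mul_conjTranspose_same (diagonal e)
  · simp [hQ0 k l hkl i j h]
  · simp only [Finset.mul_sum, Finset.sum_mul]

end BlockFactorWidthTwo

section PairBlock

variable {n : ℕ}

noncomputable def pairVec (c : ℝ) (i j : Fin n) : Fin n → ℝ :=
  Pi.single i 1 + (SignType.sign c : ℝ) • Pi.single j 1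

noncomputable def pairBlock (c : ℝ) (i j : Fin n) : Matrix (Fin n) (Fin n) ℝ :=
  (|c| / 2) • vecMulVec (pairVec c i j) (pairVec c i j)

theorem pairBlock_posSemidef (c : ℝ) (i j : Fin n) : (pairBlock c i j).PosSemidef := by
  unfold pairBlock
  simpa using (posSemidef_vecMulVec_self_star (pairVec c i j)).smul (by positivity : 0 ≤ |c| / 2)

theorem pairBlock_eq (c : ℝ) (i j : Fin n) :
    pairBlock c i j =
      (|c| / 2) • (single i i 1 + single j j 1) + (c / 2) • (single i j 1 + single j i 1) := by
  have hc : (SignType.sign c : ℝ) * |c| = c := sign_mul_abs c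
  have hc' : (SignType.sign c : ℝ) * SignType.sign c * |c| = |c| := by
    rw [mul_assoc, hc, sign_mul_self]
  ext s t
  simp only [pairBlock, pairVec, single_eq_single_vecMulVec_single, Matrix.smul_apply,
    Matrix.add_apply, vecMulVec_apply, Pi.add_apply, Pi.smul_apply, smul_eq_mul]
  set e : Fin n → Fin n → ℝ := fun k => Pi.single k 1
  linear_combination (e i s * e j t + e j s * e i t) / 2 * hc + e j s * e j t / 2 * hc'

theorem eq_or_eq_of_pairVec_apply_ne_zero {c : ℝ} {i j s : Fin n} (h : pairVec c i j s ≠ 0) :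
    s = i ∨ s = j := by
  contrapose! h
  simp [pairVec, h.1, h.2]

theorem mem_pair_of_pairBlock_apply_ne_zero {c : ℝ} {i j s t : Fin n}
    (h : pairBlock c i j s t ≠ 0) : (s = i ∨ s = j) ∧ (t = i ∨ t = j) := by
  simp only [pairBlock, Matrix.smul_apply, vecMulVec_apply, smul_eq_mul, ne_eq, mul_eq_zero,
    not_or] at h
  exact ⟨eq_or_eq_of_pairVec_apply_ne_zero h.2.1, eq_or_eq_of_pairVec_apply_ne_zero h.2.2⟩

theorem sum_pairBlock {N : Matrix (Fin n) (Fin n) ℝ} (hN : N.IsSymm) :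
    ∑ i, ∑ j, pairBlock (N i j) i j = N + diagonal fun i => ∑ j, |N i j| := by
  ext s t
  simp only [pairBlock_eq, Matrix.sum_apply, Matrix.add_apply, Matrix.smul_apply, single_apply,
    smul_eq_mul, mul_add, Finset.sum_add_distrib, diagonal_apply, ite_and, mul_ite, mul_one,
    mul_zero, sum_ite_irrel, sum_const_zero, sum_ite_eq', mem_univ, ↓reduceIte, ← Finset.sum_div]
  have hcol : ∑ x, |N x s| = ∑ x, |N s x| := by simp_rw [hN.apply]
  rw [hN.apply, hcol]
  split_ifs <;> ring

end PairBlock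

theorem Matrix.IsSymm.eq_diagonal_add_sum_pairBlock {n : ℕ} {M : Matrix (Fin n) (Fin n) ℝ}
    (hM : M.IsSymm) :
    M = diagonal (fun i => M i i - ∑ j ∈ univ.erase i, |M i j|) +
      ∑ i, ∑ j, pairBlock ((M - diagonal M.diag) i j) i j := by
  have hrow : ∀ s, ∑ j, |(M - diagonal M.diag) s j| = ∑ j ∈ univ.erase s, |M s j| := by
    intro s
    rw [← add_sum_erase _ _ (mem_univ s)]
    simp only [sub_apply, diagonal_apply_eq, diag_apply, sub_self, abs_zero, zero_add]
    exact sum_congr rfl fun j hj => by rw [diagonal_apply_ne _ (ne_of_mem_erase hj).symm, sub_zero]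
  rw [sum_pairBlock (hM.sub (isSymm_diagonal _))]
  ext s t
  rcases eq_or_ne s t with rfl | hst
  · rw [Matrix.add_apply, Matrix.add_apply, diagonal_apply_eq, diagonal_apply_eq, hrow]
    simp
  · simp [diagonal_apply_ne _ hst]

theorem IsDD.memFW {n p : ℕ} (hp : 2 ≤ p) (b : Fin n → Fin p) {M : Matrix (Fin n) (Fin n) ℝ}
    (hM : M.IsSymm) (hDD : IsDD M) : memFW b M := by
  rw [hM.eq_diagonal_add_sum_pairBlock]
  refine (memFW_diagonal b hp fun i => sub_nonneg.mpr (hDD i)).add b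
    (memFW_sum b _ fun i _ => memFW_sum b _ fun j _ => ?_)
  exact memFW_of_posSemidef_of_pair b hp (pairBlock_posSemidef _ i j) i j
    fun _ _ => mem_pair_of_pairBlock_apply_ne_zero

theorem sdd_memFW {n p : ℕ} (hp : 2 ≤ p) (b : Fin n → Fin p)
    (A : Matrix (Fin n) (Fin n) ℝ) (hA : A.IsSymm) (hSDD : IsSDD A) :
    memFW b A := by
  obtain ⟨d, hd, hDD⟩ := hSDD
  have hDAD : (diagonal d * A * diagonal d).IsSymm := by
    simp [IsSymm, transpose_mul, hA.eq, Matrix.mul_assoc]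
  convert (hDD.memFW hp b hDAD).diagonal_mul_mul_diagonal b d⁻¹ using 1
  ext i j
  simp only [diagonal_mul, mul_diagonal, Pi.inv_apply]
  field_simp [(hd i).ne', (hd j).ne']
end

section
/- Let n ≥ 2 and let A be a real symmetric n×n matrix that can be written as A = Σ_{1≤i<j≤n} Q_{ij}, where each Q_{ij} is an n×n positive semidefinite matrix whose entries vanish outside the 2×2 principal submatrix indexed by {i, j}. Then A is scaled diagonally dominant: there exists a diagonal matrix D with strictly positive diagonal entries such that DAD is diagonally dominant with nonnegative diagonal. (Together with the converse inclusion, this gives the equivalence between SDD matrices and factor-width-two matrices used in the paper.) -/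
/-!
Replace `A` by the matrix `M = ∑ comparison (Q i j)`, where `comparison` keeps the diagonal and
replaces off-diagonal entries by minus their absolute values. Each summand is a sign-flip
congruence of the PSD block `Q i j`, so `M` is PSD; it has the diagonal of `A` and, by the triangle
inequality, `M a b ≤ -|A a b|` off the diagonal. A PSD Z-matrix `M` admits a positive vector `d`
with `M *ᵥ d ≥ 0`: minimise `x ⬝ᵥ M *ᵥ x` over the standard simplex; the first-order conditions
give `M *ᵥ d ≥ 0`, the indices where `d` vanishes decouple from its support, and one recurses on
them. Row `i` of `M *ᵥ d ≥ 0` is then the dominance inequality of `diagonal d * A * diagonal d`.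
-/

open Matrix Finset

open Filter Topology

section

variable {ι : Type*} [Fintype ι]

def simplexFace (s : Finset ι) : Set (ι → ℝ) :=
  stdSimplex ℝ ι ∩ {x | ∀ i ∉ s, x i = 0}

lemma isCompact_simplexFace (s : Finset ι) : IsCompact (simplexFace s) := by
  refine (isCompact_stdSimplex ℝ ι).inter_right ?_
  simp only [Set.ofPred_forall]
  exact isClosed_iInter fun i ↦ isClosed_iInter fun _ ↦ isClosed_eq (continuous_apply i)
    continuous_const

namespace Matrix

lemma IsSymm.dotProduct_mulVec_add_smul {M : Matrix ι ι ℝ} (hM : M.IsSymm) (d u : ι → ℝ) (t : ℝ) :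
    (d + t • u) ⬝ᵥ M *ᵥ (d + t • u) =
      d ⬝ᵥ M *ᵥ d + 2 * t * (u ⬝ᵥ M *ᵥ d) + t ^ 2 * (u ⬝ᵥ M *ᵥ u) := by
  have hswap : d ⬝ᵥ M *ᵥ u = u ⬝ᵥ M *ᵥ d := by
    rw [dotProduct_mulVec, ← mulVec_transpose, hM.eq, dotProduct_comm]
  simp only [mulVec_add, mulVec_smul, dotProduct_add, add_dotProduct, dotProduct_smul,
    smul_dotProduct, smul_eq_mul, hswap]
  ring

lemma IsSymm.dotProduct_mulVec_nonneg_of_isMinOn {M : Matrix ι ι ℝ} (hM : M.IsSymm)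
    {K : Set (ι → ℝ)} {d u : ι → ℝ} (hmin : IsMinOn (fun x ↦ x ⬝ᵥ M *ᵥ x) K d) {t₀ : ℝ}
    (ht₀ : 0 < t₀) (hseg : ∀ t ∈ Set.Ioc 0 t₀, d + t • u ∈ K) : 0 ≤ u ⬝ᵥ M *ᵥ d := by
  have hslope : ∀ t ∈ Set.Ioc 0 t₀, 0 ≤ 2 * (u ⬝ᵥ M *ᵥ d) + t * (u ⬝ᵥ M *ᵥ u) := by
    intro t ht
    have hle : d ⬝ᵥ M *ᵥ d ≤ (d + t • u) ⬝ᵥ M *ᵥ (d + t • u) := hmin (hseg t ht)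
    rw [hM.dotProduct_mulVec_add_smul] at hle
    refine (mul_nonneg_iff_of_pos_left ht.1).mp ?_
    linarith
  have hlim : Tendsto (fun t ↦ 2 * (u ⬝ᵥ M *ᵥ d) + t * (u ⬝ᵥ M *ᵥ u)) (𝓝[>] 0)
      (𝓝 (2 * (u ⬝ᵥ M *ᵥ d) + 0 * (u ⬝ᵥ M *ᵥ u))) :=
    tendsto_nhdsWithin_of_tendsto_nhds (Continuous.tendsto (by fun_prop) 0)
  have := ge_of_tendsto hlim (eventually_of_mem (Ioc_mem_nhdsGT ht₀) hslope)
  linarith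

lemma mul_eq_zero_of_mulVec_nonneg {M : Matrix ι ι ℝ} (hZ : ∀ a b, a ≠ b → M a b ≤ 0) {d : ι → ℝ}
    (hd : 0 ≤ d) {j : ι} (hj : d j = 0) (hMd : 0 ≤ (M *ᵥ d) j) (k : ι) : M j k * d k = 0 := by
  have hterm : ∀ k ∈ univ, M j k * d k ≤ 0 := by
    intro k _
    rcases eq_or_ne j k with rfl | hjk
    · simp [hj]
    · exact mul_nonpos_of_nonpos_of_nonneg (hZ j k hjk) (hd k)
  have hsum : ∑ k, M j k * d k = 0 := le_antisymm (sum_nonpos hterm) hMd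
  exact (sum_eq_zero_iff_of_nonpos hterm).mp hsum k (mem_univ k)

variable [DecidableEq ι]

lemma IsSymm.mulVec_le_of_isMinOn_simplexFace {M : Matrix ι ι ℝ} (hM : M.IsSymm) {s : Finset ι}
    {d : ι → ℝ} (hmin : IsMinOn (fun x ↦ x ⬝ᵥ M *ᵥ x) (simplexFace s) d) (hd : d ∈ simplexFace s)
    {i j : ι} (hi : 0 < d i) (hj : j ∈ s) : (M *ᵥ d) i ≤ (M *ᵥ d) j := by
  rcases eq_or_ne i j with rfl | hij
  · rfl
  obtain ⟨⟨hd0, hd1⟩, hds⟩ := hd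
  set u : ι → ℝ := Pi.single j 1 - Pi.single i 1
  have hseg : ∀ t ∈ Set.Ioc 0 (d i), d + t • u ∈ simplexFace s := by
    rintro t ⟨ht0, hti⟩
    refine ⟨⟨fun k ↦ ?_, ?_⟩, fun k hk ↦ ?_⟩
    · rcases eq_or_ne k i with rfl | hki
      · simp [u, hij]; linarith
      · rcases eq_or_ne k j with rfl | hkj
        · simp [u, hki]; linarith [hd0 k]
        · simp [u, hki, hkj, hd0 k]
    · simp [u, sum_add_distrib, hd1, ← mul_sum, sum_sub_distrib]
    · have hki : k ≠ i := fun h ↦ by rw [← h, hds k hk] at hi; exact hi.false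
      have hkj : k ≠ j := fun h ↦ hk (h ▸ hj)
      simp [u, hki, hkj, hds k hk]
  have := hM.dotProduct_mulVec_nonneg_of_isMinOn hmin hi hseg
  simpa [u, sub_dotProduct, single_dotProduct] using this

lemma PosSemidef.exists_mem_simplexFace_mulVec_nonneg {M : Matrix ι ι ℝ} (hM : M.PosSemidef)
    {s : Finset ι} (hs : s.Nonempty) :
    ∃ d ∈ simplexFace s, ∀ j ∈ s, 0 ≤ (M *ᵥ d) j := by
  have hsymm : M.IsSymm := isHermitian_iff_isSymm.mp hM.1
  obtain ⟨i₀, hi₀⟩ := hs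
  have hne : (simplexFace s).Nonempty :=
    ⟨Pi.single i₀ 1, single_mem_stdSimplex ℝ i₀,
      fun i hi ↦ by simp [(ne_of_mem_of_not_mem hi₀ hi).symm]⟩
  obtain ⟨d, hd, hmin⟩ := (isCompact_simplexFace s).exists_isMinOn hne
    (by fun_prop : Continuous fun x : ι → ℝ ↦ x ⬝ᵥ M *ᵥ x).continuousOn
  refine ⟨d, hd, fun j hj ↦ ?_⟩
  -- On the support of the minimiser, `M *ᵥ d` attains its minimum over `s`, and the
  -- nonnegative number `d ⬝ᵥ M *ᵥ d` is a convex combination of these values.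
  calc 0 ≤ d ⬝ᵥ M *ᵥ d := by simpa using hM.dotProduct_mulVec_nonneg d
    _ = ∑ i, d i * (M *ᵥ d) i := rfl
    _ ≤ ∑ i, d i * (M *ᵥ d) j := by
      refine sum_le_sum fun i _ ↦ ?_
      rcases (hd.1.1 i).eq_or_lt with hi | hi
      · simp [← hi]
      · exact mul_le_mul_of_nonneg_left (hsymm.mulVec_le_of_isMinOn_simplexFace hmin hd hi hj) hi.le
    _ = (M *ᵥ d) j := by rw [← sum_mul, hd.1.2, one_mul]

lemma PosSemidef.exists_pos_on_mulVec_nonneg {M : Matrix ι ι ℝ} (hM : M.PosSemidef)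
    (hZ : ∀ a b, a ≠ b → M a b ≤ 0) (s : Finset ι) :
    ∃ d : ι → ℝ, (∀ i ∈ s, 0 < d i) ∧ (∀ i ∉ s, d i = 0) ∧ ∀ i ∈ s, 0 ≤ (M *ᵥ d) i := by
  induction s using strongInduction with
  | H s ih =>
  rcases s.eq_empty_or_nonempty with rfl | hs
  · exact ⟨0, by simp, by simp, by simp⟩
  obtain ⟨d, ⟨⟨hd0, hd1⟩, hds⟩, hMd⟩ := hM.exists_mem_simplexFace_mulVec_nonneg hs
  -- Recurse on the indices that the simplex minimiser `d` leaves at zero.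
  set T := s.filter (d · = 0)
  have hTs : T ⊂ s := by
    obtain ⟨i, -, hi⟩ := exists_ne_zero_of_sum_ne_zero (hd1.trans_ne one_ne_zero)
    exact filter_ssubset.mpr ⟨i, by_contra fun h ↦ hi (hds i h), hi⟩
  obtain ⟨e, he_pos, he_zero, hMe⟩ := ih T hTs
  have he0 : 0 ≤ e := fun i ↦ if h : i ∈ T then (he_pos i h).le else (he_zero i h).ge
  -- `M` has no entries between `T` and the support of `d`.
  have hMe_zero : ∀ i, 0 < d i → (M *ᵥ e) i = 0 := by
    intro i hi
    refine sum_eq_zero fun k _ ↦ ?_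
    by_cases hk : k ∈ T
    · obtain ⟨hks, hdk⟩ := mem_filter.mp hk
      have := mul_eq_zero_of_mulVec_nonneg hZ hd0 hdk (hMd k hks) i
      change M i k * e k = 0
      rw [(isHermitian_iff_isSymm.mp hM.1).apply k i, (mul_eq_zero.mp this).resolve_right hi.ne',
        zero_mul]
    · rw [he_zero k hk, mul_zero]
  refine ⟨d + e, fun i hi ↦ ?_, fun i hi ↦ ?_, fun i hi ↦ ?_⟩
  · rcases (hd0 i).eq_or_lt with hdi | hdi
    · simpa [← hdi] using he_pos i (mem_filter.mpr ⟨hi, hdi.symm⟩)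
    · exact add_pos_of_pos_of_nonneg hdi (he0 i)
  · simp [hds i hi, he_zero i fun h ↦ hi (mem_filter.mp h).1]
  · rw [mulVec_add, Pi.add_apply]
    rcases (hd0 i).eq_or_lt with hdi | hdi
    · exact add_nonneg (hMd i hi) (hMe i (mem_filter.mpr ⟨hi, hdi.symm⟩))
    · rw [hMe_zero i hdi, add_zero]
      exact hMd i hi

def comparison (A : Matrix ι ι ℝ) : Matrix ι ι ℝ :=
  of fun a b ↦ if a = b then A a a else -|A a b|

lemma comparison_eq_diagonal_mul_mul_diagonal {A : Matrix ι ι ℝ} {s : ι → ℝ} (hs : ∀ a, |s a| = 1)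
    (hsign : ∀ a b, a ≠ b → s a * A a b * s b ≤ 0) :
    comparison A = diagonal s * A * diagonal s := by
  ext a b
  simp only [comparison, of_apply, mul_diagonal, diagonal_mul]
  split_ifs with hab
  · subst hab
    rw [mul_right_comm, ← abs_mul_abs_self, hs, one_mul, one_mul]
  · have habs : |s a * A a b * s b| = |A a b| := by rw [abs_mul, abs_mul, hs, hs, one_mul, mul_one]
    linarith [abs_of_nonpos (hsign a b hab)]

lemma PosSemidef.comparison_of_supported_pair {Q : Matrix ι ι ℝ} (hQ : Q.PosSemidef) {i j : ι}
    (hij : i ≠ j) (hsupp : ∀ a b, (a ≠ i ∧ a ≠ j) ∨ (b ≠ i ∧ b ≠ j) → Q a b = 0) :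
    (comparison Q).PosSemidef := by
  -- Flipping the sign of coordinate `j` if needed makes the only off-diagonal pair nonpositive.
  set σ : ℝ := if 0 ≤ Q i j then -1 else 1
  set s : ι → ℝ := fun a ↦ if a = j then σ else 1
  have hs : ∀ a, |s a| = 1 := fun a ↦ by simp only [s, σ]; split_ifs <;> simp
  have hsign : ∀ a b, a ≠ b → s a * Q a b * s b ≤ 0 := by
    intro a b hab
    by_cases hin : (a = i ∨ a = j) ∧ (b = i ∨ b = j)
    · have hji : Q j i = Q i j := (isHermitian_iff_isSymm.mp hQ.1).apply i j
      rcases hin with ⟨rfl | rfl, rfl | rfl⟩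
      · exact absurd rfl hab
      · simp only [s, σ, if_neg hij, if_true]; split_ifs <;> linarith
      · simp only [s, σ, if_neg hij, if_true, hji]; split_ifs <;> linarith
      · exact absurd rfl hab
    · rw [hsupp a b (by tauto)]
      simp
  rw [comparison_eq_diagonal_mul_mul_diagonal hs hsign]
  simpa using hQ.conjTranspose_mul_mul_same (diagonal s)

end Matrix

end

lemma isDD_diagonal_mul_mul_diagonal {n : ℕ} {A : Matrix (Fin n) (Fin n) ℝ} {d : Fin n → ℝ}
    (hd : ∀ i, 0 < d i) (h : ∀ i, ∑ j ∈ univ.erase i, |A i j| * d j ≤ A i i * d i) :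
    IsDD (diagonal d * A * diagonal d) := by
  intro i
  simp only [mul_diagonal, diagonal_mul, abs_mul, abs_of_pos (hd _)]
  calc ∑ j ∈ univ.erase i, d i * |A i j| * d j = d i * ∑ j ∈ univ.erase i, |A i j| * d j := by
        rw [mul_sum]; simp only [mul_assoc]
    _ ≤ d i * (A i i * d i) := mul_le_mul_of_nonneg_left (h i) (hd i).le
    _ = d i * A i i * d i := by ring

theorem isSDD_of_posSemidef {n : ℕ} {A M : Matrix (Fin n) (Fin n) ℝ} (hM : M.PosSemidef)
    (hdiag : ∀ i, M i i ≤ A i i) (hoff : ∀ i j, i ≠ j → M i j ≤ -|A i j|) : IsSDD A := by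
  obtain ⟨d, hd_univ, -, hMd⟩ := hM.exists_pos_on_mulVec_nonneg
    (fun i j hij ↦ (hoff i j hij).trans (neg_nonpos.mpr (abs_nonneg _))) univ
  have hd : ∀ i, 0 < d i := fun i ↦ hd_univ i (mem_univ i)
  refine ⟨d, hd, isDD_diagonal_mul_mul_diagonal hd fun i ↦ ?_⟩
  have hrow : (M *ᵥ d) i = M i i * d i + ∑ j ∈ univ.erase i, M i j * d j :=
    (add_sum_erase _ (fun j ↦ M i j * d j) (mem_univ i)).symm
  calc ∑ j ∈ univ.erase i, |A i j| * d j ≤ ∑ j ∈ univ.erase i, -(M i j * d j) := by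
        refine sum_le_sum fun j hj ↦ ?_
        have := mul_le_mul_of_nonneg_right (hoff i j (ne_of_mem_erase hj).symm) (hd j).le
        linarith
    _ ≤ M i i * d i := by rw [sum_neg_distrib]; linarith [hMd i (mem_univ i)]
    _ ≤ A i i * d i := mul_le_mul_of_nonneg_right (hdiag i) (hd i).le

theorem factorWidthTwo_isSDD_general {n : ℕ}
    (A : Matrix (Fin n) (Fin n) ℝ)
    (Q : Fin n → Fin n → Matrix (Fin n) (Fin n) ℝ)
    (hpsd : ∀ i j : Fin n, i < j → (Q i j).PosSemidef)
    (hsupp : ∀ i j : Fin n, i < j → ∀ a c : Fin n,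
      (a ≠ i ∧ a ≠ j) ∨ (c ≠ i ∧ c ≠ j) → Q i j a c = 0)
    (hsum : A = ∑ i : Fin n, ∑ j ∈ Finset.Ioi i, Q i j) :
    IsSDD A := by
  have hA : ∀ a b, A a b = ∑ i, ∑ j ∈ Ioi i, Q i j a b := by simp [hsum, Matrix.sum_apply]
  refine isSDD_of_posSemidef (M := ∑ i, ∑ j ∈ Ioi i, comparison (Q i j)) ?_ ?_ ?_
  · refine posSemidef_sum _ fun i _ ↦ posSemidef_sum _ fun j hj ↦ ?_
    have hij := mem_Ioi.mp hj
    exact (hpsd i j hij).comparison_of_supported_pair hij.ne (hsupp i j hij)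
  · intro a
    simp [hA, Matrix.sum_apply, comparison]
  · intro a b hab
    simp only [hA, Matrix.sum_apply, comparison, of_apply, if_neg hab, sum_neg_distrib,
      neg_le_neg_iff]
    exact (abs_sum_le_sum_abs _ _).trans (sum_le_sum fun i _ ↦ abs_sum_le_sum_abs _ _)

theorem factorWidthTwo_isSDD {n : ℕ} (hn : 2 ≤ n)
    (A : Matrix (Fin n) (Fin n) ℝ) (hA : A.IsSymm)
    (Q : Fin n → Fin n → Matrix (Fin n) (Fin n) ℝ)
    (hpsd : ∀ i j : Fin n, i < j → (Q i j).PosSemidef)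
    (hsupp : ∀ i j : Fin n, i < j → ∀ a c : Fin n,
      (a ≠ i ∧ a ≠ j) ∨ (c ≠ i ∧ c ≠ j) → Q i j a c = 0)
    (hsum : A = ∑ i : Fin n, ∑ j ∈ Finset.Ioi i, Q i j) :
    IsSDD A :=
  factorWidthTwo_isSDD_general A Q hpsd hsupp hsum
end

section
/- Let n, p be natural numbers and b : Fin n → Fin p a block assignment map, and let X be a real symmetric n×n matrix. Then trace(AX) ≥ 0 for every A ∈ FW_b if and only if, for every pair k < l in Fin p and every vector v ∈ ℝⁿ with v_i = 0 whenever b(i) ∉ {k,l}, one has vᵀ X v ≥ 0. In other words, the dual cone (FW_b)* consists exactly of the symmetric matrices all of whose 2×2-block principal submatrices (on the index sets {i : b(i) ∈ {k,l}}) are positive semidefinite. -/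
open Matrix Finset

/-!
Every matrix of `FW_b` is a sum of positive semidefinite matrices supported on pairs of blocks,
and such a matrix is a sum of rank-one matrices `v vᵀ` whose vectors `v` are supported on the same
pair of blocks, because its diagonal vanishes off it. Since `trace (v vᵀ X) = vᵀ X v` and each of
these `v vᵀ` lies in `FW_b` itself, the dual cone is cut out exactly by these quadratic forms.
-/

section

variable {ι : Type*} [Fintype ι]

theorem trace_vecMulVec_mul {R : Type*} [CommSemiring R] (v w : ι → R) (X : Matrix ι ι R) :
    (vecMulVec v w * X).trace = w ⬝ᵥ X *ᵥ v := by
  rw [vecMulVec_mul, trace_vecMulVec, dotProduct_comm, ← dotProduct_mulVec]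

theorem Matrix.PosSemidef.trace_mul_nonneg_of_diag_eq_zero {Q X : Matrix ι ι ℝ} (hQ : Q.PosSemidef)
    {S : Set ι} (hQS : ∀ i ∉ S, Q i i = 0)
    (hX : ∀ v : ι → ℝ, (∀ i ∉ S, v i = 0) → 0 ≤ v ⬝ᵥ X *ᵥ v) :
    0 ≤ (Q * X).trace := by
  obtain ⟨m, v, rfl⟩ := posSemidef_iff_eq_sum_vecMulVec.mp hQ
  simp only [star_trivial] at hQS ⊢
  -- `Q i i = ∑ r, v r i ^ 2`, so every `v r` vanishes off `S`
  have hvS : ∀ r, ∀ i ∉ S, v r i = 0 := fun r i hi => by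
    have hsq := hQS i hi
    simp only [sum_apply, vecMulVec_apply] at hsq
    exact mul_self_eq_zero.mp <|
      (sum_eq_zero_iff_of_nonneg fun r _ => mul_self_nonneg (v r i)).mp hsq r (mem_univ r)
  rw [sum_mul, trace_sum]
  exact sum_nonneg fun r _ => trace_vecMulVec_mul (v r) (v r) X ▸ hX (v r) (hvS r)

end

theorem memFW_of_posSemidef {n p : ℕ} {b : Fin n → Fin p} {k l : Fin p} (hkl : k < l)
    {A : Matrix (Fin n) (Fin n) ℝ} (hA : A.PosSemidef)
    (hAkl : ∀ i j : Fin n, (b i ≠ k ∧ b i ≠ l) ∨ (b j ≠ k ∧ b j ≠ l) → A i j = 0) :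
    memFW b A := by
  classical
  refine ⟨fun k' l' => if k' = k ∧ l' = l then A else 0, fun k' l' _ => ?_,
    fun k' l' _ i j hij => ?_, ?_⟩
  · dsimp only
    split_ifs
    exacts [hA, PosSemidef.zero]
  · dsimp only
    split_ifs with h
    · obtain ⟨rfl, rfl⟩ := h
      exact hAkl i j hij
    · rfl
  · simp [ite_and, hkl]

theorem dual_fw_characterization_general {n p : ℕ} (b : Fin n → Fin p)
    (X : Matrix (Fin n) (Fin n) ℝ) :
    (∀ A : Matrix (Fin n) (Fin n) ℝ, memFW b A → 0 ≤ (A * X).trace) ↔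
    (∀ k l : Fin p, k < l → ∀ v : Fin n → ℝ,
      (∀ i : Fin n, (b i ≠ k ∧ b i ≠ l) → v i = 0) →
      0 ≤ v ⬝ᵥ X.mulVec v) := by
  constructor
  · intro hdual k l hkl v hv
    have hmem : memFW b (vecMulVec v v) := by
      refine memFW_of_posSemidef hkl (by simpa using posSemidef_vecMulVec_self_star v) ?_
      rintro i j (hi | hj) <;> simp [vecMulVec_apply, hv _ ‹_›]
    simpa [trace_vecMulVec_mul] using hdual _ hmem
  · rintro hblock A ⟨Q, hQ, hQkl, rfl⟩
    rw [sum_mul, trace_sum]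
    refine sum_nonneg fun k _ => ?_
    rw [sum_mul, trace_sum]
    refine sum_nonneg fun l hl => ?_
    have hkl := mem_Ioi.mp hl
    refine PosSemidef.trace_mul_nonneg_of_diag_eq_zero (hQ k l hkl) (S := {i | b i = k ∨ b i = l})
      (fun i hi => hQkl k l hkl i i (Or.inl (not_or.mp hi)))
      fun v hv => hblock k l hkl v fun i hi => hv i (not_or.mpr hi)

theorem dual_fw_characterization {n p : ℕ} (b : Fin n → Fin p)
    (X : Matrix (Fin n) (Fin n) ℝ) (hX : X.IsSymm) :
    (∀ A : Matrix (Fin n) (Fin n) ℝ, memFW b A → 0 ≤ (A * X).trace) ↔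
    (∀ k l : Fin p, k < l → ∀ v : Fin n → ℝ,
      (∀ i : Fin n, (b i ≠ k ∧ b i ≠ l) → v i = 0) →
      0 ≤ v ⬝ᵥ X.mulVec v) :=
  dual_fw_characterization_general b X
end

section
/- Let n, p be natural numbers with p ≥ 2 and b : Fin n → Fin p a block assignment map, and let M be any real symmetric n×n matrix. Then there exists λ̄ ∈ (0,1) such that for every λ with 0 < λ < λ̄, the matrix (1−λ)·I + λ·M belongs to FW_b; that is, the identity matrix lies in the interior of the block factor-width-two cone in the direction of any symmetric matrix. -/
open Matrix Finset

/-!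
Split `A` over the pairs of blocks: the pair `{k, l}` receives the restriction of `A` to the
blocks `k` and `l`, with the entries inside a single block divided by `p - 1`, the number of
pairs containing that block. For `A = (1 - λ) • 1 + λ • M` every piece is a principal
restriction of `((1 - λ) / (p - 1)) • 1 + λ • (W ⊙ M)`, where `W` holds these weights `1 / (p - 1)`
and `1`; that matrix is diagonally dominant, hence positive semidefinite, once `λ` is small.
-/

section DiagonalDominance

variable {ι : Type*} [Fintype ι]

lemma abs_mul_le_sum_sq (x : ι → ℝ) (i j : ι) : |x i * x j| ≤ ∑ k, x k ^ 2 := by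
  have hi : x i ^ 2 ≤ ∑ k, x k ^ 2 := single_le_sum (fun k _ => sq_nonneg (x k)) (mem_univ i)
  have hj : x j ^ 2 ≤ ∑ k, x k ^ 2 := single_le_sum (fun k _ => sq_nonneg (x k)) (mem_univ j)
  rw [abs_mul]
  nlinarith [two_mul_le_add_sq |x i| |x j|, sq_abs (x i), sq_abs (x j)]

theorem posSemidef_smul_one_add_of_sum_abs_le [DecidableEq ι] {N : Matrix ι ι ℝ}
    (hN : N.IsSymm) {c : ℝ} (hc : ∑ i, ∑ j, |N i j| ≤ c) : (c • 1 + N).PosSemidef := by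
  refine .of_dotProduct_mulVec_nonneg
    (isHermitian_iff_isSymm.2 ((isSymm_one.smul c).add hN)) fun x => ?_
  set S := ∑ k, x k ^ 2
  have hS : 0 ≤ S := by positivity
  have hquad : x ⬝ᵥ (c • 1 + N) *ᵥ x = c * S + ∑ i, ∑ j, N i j * (x i * x j) := by
    rw [add_mulVec, smul_mulVec, one_mulVec, dotProduct_add, dotProduct_smul, smul_eq_mul]
    simp only [dotProduct, mulVec, mul_sum, S, sq]
    congr 1
    exact sum_congr rfl fun i _ => sum_congr rfl fun j _ => by ring
  have hlower : -(∑ i, ∑ j, |N i j|) * S ≤ ∑ i, ∑ j, N i j * (x i * x j) := by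
    simp only [neg_mul, sum_mul, ← sum_neg_distrib]
    gcongr with i _ j _
    calc -(|N i j| * S) ≤ -|N i j * (x i * x j)| := by
          rw [abs_mul]
          exact neg_le_neg (mul_le_mul_of_nonneg_left (abs_mul_le_sum_sq x i j) (abs_nonneg _))
      _ ≤ _ := neg_abs_le _
  rw [star_trivial, hquad]
  nlinarith [mul_le_mul_of_nonneg_right hc hS]

end DiagonalDominance

theorem sum_Ioi_ite_mem_pair {p : ℕ} (u v : Fin p) :
    ∑ k, ∑ l ∈ Ioi k, (if (u = k ∨ u = l) ∧ (v = k ∨ v = l) then (1 : ℝ) else 0) =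
      if u = v then (p : ℝ) - 1 else 1 := by
  split_ifs with huv
  · subst huv
    have hsplit : ∀ k, ∀ l ∈ Ioi k, (if (u = k ∨ u = l) ∧ (u = k ∨ u = l) then (1 : ℝ) else 0) =
        (if u = k then 1 else 0) + (if l = u then 1 else 0) := by
      intro k l hkl
      have : k ≠ l := (mem_Ioi.1 hkl).ne
      by_cases h : u = k <;> by_cases h' : u = l <;> simp_all [eq_comm]
    rw [sum_congr rfl fun k _ => sum_congr rfl (hsplit k)]
    simp only [sum_add_distrib, sum_const, nsmul_eq_mul, mul_ite, mul_one, mul_zero, sum_ite_eq,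
      mem_univ, if_true, sum_ite_eq', mem_Ioi]
    have := u.isLt
    rw [sum_boole, filter_gt_eq_Iio, Fin.card_Ioi, Fin.card_Iio, ← Nat.cast_add,
      Nat.sub_add_cancel (by omega), Nat.cast_pred (by omega)]
  · have hpair : ∀ k, ∀ l ∈ Ioi k, ((u = k ∨ u = l) ∧ (v = k ∨ v = l) ↔
        k = min u v ∧ l = max u v) := by
      intro k l hkl
      rw [mem_Ioi] at hkl
      rcases lt_or_gt_of_ne huv with h | h
      · rw [min_eq_left h.le, max_eq_right h.le]
        simp only [Fin.ext_iff, Fin.lt_def] at *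
        omega
      · rw [min_eq_right h.le, max_eq_left h.le]
        simp only [Fin.ext_iff, Fin.lt_def] at *
        omega
    rw [sum_congr rfl fun k _ => sum_congr rfl fun l hl => if_congr (hpair k l hl) rfl rfl]
    simp [ite_and, Ne.symm huv]

lemma one_le_natCast_sub_one {p : ℕ} (hp : 2 ≤ p) : (1 : ℝ) ≤ p - 1 := by
  have : (2 : ℝ) ≤ p := by exact_mod_cast hp
  linarith

section BlockPairs

variable {n p : ℕ} (b : Fin n → Fin p)

def blockPairProj (k l : Fin p) : Matrix (Fin n) (Fin n) ℝ :=
  diagonal fun i => if b i = k ∨ b i = l then 1 else 0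

/-- The number of pairs `k < l` of blocks that contain both `i` and `j`
(see `sum_Ioi_ite_mem_pair`). -/
def blockPairCount : Matrix (Fin n) (Fin n) ℝ :=
  of fun i j => if b i = b j then (p : ℝ) - 1 else 1

noncomputable def blockPairWeight : Matrix (Fin n) (Fin n) ℝ :=
  of fun i j => (blockPairCount b i j)⁻¹

lemma blockPairProj_mul_mul_blockPairProj_apply (X : Matrix (Fin n) (Fin n) ℝ) (k l : Fin p)
    (i j : Fin n) :
    (blockPairProj b k l * X * blockPairProj b k l) i j =
      if (b i = k ∨ b i = l) ∧ (b j = k ∨ b j = l) then X i j else 0 := by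
  simp only [blockPairProj, diagonal_mul, mul_diagonal, ite_and]
  split_ifs <;> simp

lemma sum_blockPairProj_mul_mul_blockPairProj (X : Matrix (Fin n) (Fin n) ℝ) :
    ∑ k, ∑ l ∈ Ioi k, blockPairProj b k l * X * blockPairProj b k l = blockPairCount b ⊙ X := by
  ext i j
  simp only [Matrix.sum_apply, blockPairProj_mul_mul_blockPairProj_apply, hadamard_apply,
    blockPairCount, of_apply, ← sum_Ioi_ite_mem_pair, sum_mul, ite_mul, one_mul, zero_mul]

lemma blockPairCount_hadamard_blockPairWeight_hadamard (hp : 2 ≤ p)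
    (A : Matrix (Fin n) (Fin n) ℝ) : blockPairCount b ⊙ (blockPairWeight b ⊙ A) = A := by
  have hp1 : (p : ℝ) - 1 ≠ 0 := (one_pos.trans_le (one_le_natCast_sub_one hp)).ne'
  ext i j
  simp only [hadamard_apply, blockPairWeight, of_apply, ← mul_assoc]
  rw [mul_inv_cancel₀ (by simp only [blockPairCount, of_apply]; split_ifs <;> simp [hp1]), one_mul]

lemma isSymm_blockPairWeight_hadamard {M : Matrix (Fin n) (Fin n) ℝ} (hM : M.IsSymm) :
    (blockPairWeight b ⊙ M).IsSymm :=
  IsSymm.ext fun i j => by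
    simp only [hadamard_apply, blockPairWeight, blockPairCount, of_apply, eq_comm, hM.apply i j]

theorem memFW_of_posSemidef_blockPairWeight_hadamard (hp : 2 ≤ p) {A : Matrix (Fin n) (Fin n) ℝ}
    (hA : (blockPairWeight b ⊙ A).PosSemidef) : memFW b A := by
  refine ⟨fun k l => blockPairProj b k l * (blockPairWeight b ⊙ A) * blockPairProj b k l,
    fun k l _ => ?_, fun k l _ i j hij => ?_, ?_⟩
  · simpa [blockPairProj] using hA.conjTranspose_mul_mul_same (blockPairProj b k l)
  · simp only [blockPairProj_mul_mul_blockPairProj_apply]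
    rw [if_neg]
    tauto
  · rw [sum_blockPairProj_mul_mul_blockPairProj,
      blockPairCount_hadamard_blockPairWeight_hadamard b hp]

lemma blockPairWeight_hadamard_one : blockPairWeight b ⊙ 1 = ((p : ℝ) - 1)⁻¹ • 1 := by
  ext i j
  by_cases h : i = j <;> simp [h, blockPairWeight, blockPairCount, one_apply]

theorem posSemidef_blockPairWeight_hadamard (hp : 2 ≤ p) {M : Matrix (Fin n) (Fin n) ℝ}
    (hM : M.IsSymm) {lam : ℝ} (hlam : 0 ≤ lam)
    (hsmall : lam * ((p : ℝ) - 1) * ∑ i, ∑ j, |(blockPairWeight b ⊙ M) i j| ≤ 1 - lam) :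
    (blockPairWeight b ⊙ ((1 - lam) • 1 + lam • M)).PosSemidef := by
  have hp1 : (0 : ℝ) < p - 1 := one_pos.trans_le (one_le_natCast_sub_one hp)
  rw [hadamard_add, hadamard_smul, hadamard_smul, blockPairWeight_hadamard_one, smul_smul]
  refine posSemidef_smul_one_add_of_sum_abs_le
    ((isSymm_blockPairWeight_hadamard b hM).smul lam) ?_
  simp only [Matrix.smul_apply, smul_eq_mul, abs_mul, abs_of_nonneg hlam, ← mul_sum]
  rw [← div_eq_mul_inv, le_div_iff₀ hp1]
  linarith

end BlockPairs

theorem one_mem_interior_fw {n p : ℕ} (hp : 2 ≤ p) (b : Fin n → Fin p)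
    (M : Matrix (Fin n) (Fin n) ℝ) (hM : M.IsSymm) :
    ∃ lamBar : ℝ, lamBar ∈ Set.Ioo (0 : ℝ) 1 ∧
      ∀ lam : ℝ, 0 < lam → lam < lamBar →
        memFW b ((1 - lam) • (1 : Matrix (Fin n) (Fin n) ℝ) + lam • M) := by
  set K := ∑ i, ∑ j, |(blockPairWeight b ⊙ M) i j|
  have hK : 0 ≤ K := by positivity
  have hp1 := one_le_natCast_sub_one hp
  refine ⟨1 / (2 + (p - 1) * K), ⟨by positivity, ?_⟩, fun lam hlam₀ hlam => ?_⟩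
  · rw [div_lt_one (by positivity)]
    nlinarith
  rw [lt_div_iff₀ (by positivity)] at hlam
  exact memFW_of_posSemidef_blockPairWeight_hadamard b hp
    (posSemidef_blockPairWeight_hadamard b hp hM hlam₀.le (by nlinarith))
end

section
/- (Monotonically decreasing upper bounds, Proposition 1 key step.) Let n, m, p ∈ ℕ with p ≥ 2, b : Fin n → Fin p a block assignment map, and let C, A_1, …, A_m be real symmetric n×n matrices and g ∈ ℝ^m. Suppose X₀ ∈ F(V) for some real n×n matrix V (i.e. ⟨A_i, X₀⟩ = g_i for all i and X₀ ∈ FW_b(V)), and let V' be any real n×n matrix with V'ᵀ V' = X₀ (e.g. a Cholesky factor of X₀). Then X₀ ∈ F(V'); consequently, if the set {⟨C, X⟩ : X ∈ F(V')} is bounded below, its infimum is at most ⟨C, X₀⟩. In particular the optimal values U^t of the iterative inner approximation with V_{t+1} = chol(X_t^⋆) satisfy U^1 ≥ U^2 ≥ … ≥ U^t ≥ U^{t+1}. -/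
/-! Every block lies in some pair of blocks (this needs `p ≥ 2`), so the identity is block
factor-width-two; hence `X₀ = V'ᵀ * 1 * V' ∈ FW_b(V')`, while the linear constraints on `X₀` do
not involve `V` at all. -/

open Matrix Finset

/-- Feasible set of the inner approximation at `V`:
`⟨A_i, X⟩ = g i` for all `i`, and `X ∈ FW_b(V)`. -/
def Fset {n m p : ℕ} (b : Fin n → Fin p) (A : Fin m → Matrix (Fin n) (Fin n) ℝ)
    (g : Fin m → ℝ) (V : Matrix (Fin n) (Fin n) ℝ) : Set (Matrix (Fin n) (Fin n) ℝ) :=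
  {X | (∀ i : Fin m, (A i * X).trace = g i) ∧ memFWV b V X}

theorem memFW_diagonal_s9 {n q : ℕ} (b : Fin n → Fin (q + 2)) {d : Fin n → ℝ} (hd : 0 ≤ d) :
    memFW b (diagonal d) := by
  -- block `j` is covered by the pair `(0, max j 1)`
  set top : Fin (q + 2) → Fin (q + 2) := fun j => max j 1
  have zero_lt_top (j) : 0 < top j := lt_max_of_lt_right Fin.zero_lt_one
  have mem_pair (j) : j = 0 ∨ j = top j := by
    rcases eq_or_ne j 0 with h | h
    · exact .inl h
    · exact .inr (max_eq_left (Fin.one_le_of_ne_zero h)).symm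
  refine ⟨fun k l => diagonal fun i => if k = 0 ∧ l = top (b i) then d i else 0, ?_, ?_, ?_⟩
  · intro k l _
    exact posSemidef_diagonal_iff.mpr fun i => ite_nonneg (hd i) le_rfl
  · rintro k l - i j hij
    rcases eq_or_ne i j with rfl | hne
    · dsimp only
      rw [diagonal_apply_eq, if_neg]
      rintro ⟨rfl, rfl⟩
      rcases hij with h | h <;> rcases mem_pair (b i) with h' | h' <;> tauto
    · exact diagonal_apply_ne _ hne
  · ext i j
    rcases eq_or_ne i j with rfl | hne
    · simp [Matrix.sum_apply, ite_and, Finset.sum_ite_eq', zero_lt_top]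
    · simp [Matrix.sum_apply, diagonal_apply_ne _ hne]

theorem memFW_one {n p : ℕ} (hp : 2 ≤ p) (b : Fin n → Fin p) :
    memFW b (1 : Matrix (Fin n) (Fin n) ℝ) := by
  obtain ⟨q, rfl⟩ := Nat.exists_eq_add_of_le' hp
  simpa using memFW_diagonal_s9 b (d := 1) zero_le_one

theorem memFWV_transpose_mul_self {n p : ℕ} (hp : 2 ≤ p) (b : Fin n → Fin p)
    (V : Matrix (Fin n) (Fin n) ℝ) : memFWV b V (Vᵀ * V) :=
  ⟨1, memFW_one hp b, by rw [mul_one]⟩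

theorem inner_approx_monotone_step_general {n m p : ℕ} (hp : 2 ≤ p) (b : Fin n → Fin p)
    (C : Matrix (Fin n) (Fin n) ℝ) (A : Fin m → Matrix (Fin n) (Fin n) ℝ)
    (g : Fin m → ℝ)
    (V V' X₀ : Matrix (Fin n) (Fin n) ℝ)
    (hX₀ : X₀ ∈ Fset b A g V) (hV' : V'ᵀ * V' = X₀) :
    X₀ ∈ Fset b A g V' ∧
    (BddBelow {r : ℝ | ∃ X ∈ Fset b A g V', r = (C * X).trace} →
      sInf {r : ℝ | ∃ X ∈ Fset b A g V', r = (C * X).trace} ≤ (C * X₀).trace) := by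
  have hmem : X₀ ∈ Fset b A g V' := ⟨hX₀.1, hV' ▸ memFWV_transpose_mul_self hp b V'⟩
  exact ⟨hmem, fun hbdd => csInf_le hbdd ⟨X₀, hmem, rfl⟩⟩

theorem inner_approx_monotone_step {n m p : ℕ} (hp : 2 ≤ p) (b : Fin n → Fin p)
    (C : Matrix (Fin n) (Fin n) ℝ) (A : Fin m → Matrix (Fin n) (Fin n) ℝ)
    (g : Fin m → ℝ) (hC : C.IsSymm) (hAs : ∀ i, (A i).IsSymm)
    (V V' X₀ : Matrix (Fin n) (Fin n) ℝ)
    (hX₀ : X₀ ∈ Fset b A g V) (hV' : V'ᵀ * V' = X₀) :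
    X₀ ∈ Fset b A g V' ∧
    (BddBelow {r : ℝ | ∃ X ∈ Fset b A g V', r = (C * X).trace} →
      sInf {r : ℝ | ∃ X ∈ Fset b A g V', r = (C * X).trace} ≤ (C * X₀).trace) :=
  inner_approx_monotone_step_general hp b C A g V V' X₀ hX₀ hV'
end

section
/- (Theorem 2: strictly decreasing upper bounds.) Let n, m, p ∈ ℕ with p ≥ 2, b : Fin n → Fin p a block assignment map, C, A_1, …, A_m real symmetric n×n matrices and g ∈ ℝ^m. Suppose: (i) X_t is a real symmetric positive definite n×n matrix with ⟨A_i, X_t⟩ = g_i for all i; (ii) X★ is a positive semidefinite matrix with ⟨A_i, X★⟩ = g_i for all i and ⟨C, X★⟩ < ⟨C, X_t⟩; (iii) V' is a real n×n matrix with V'ᵀ V' = X_t. Then there exists λ ∈ (0,1) such that the matrix X̂ := (1−λ)·X_t + λ·X★ satisfies X̂ ∈ F(V') and ⟨C, X̂⟩ < ⟨C, X_t⟩. In particular, if X_t attains the inner-approximation value U^t at iteration t and X_t is positive definite with U^t > p★, then U^t > U^{t+1} ≥ p★. -/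
open Matrix Finset

lemma posSemidef_diagonal_add_of_sum_abs_le {ι : Type*} [Fintype ι] [DecidableEq ι]
    (s : ι → Prop) [DecidablePred s] {N : Matrix ι ι ℝ} (hN : N.IsHermitian)
    (hsupp : ∀ i j, N i j ≠ 0 → s i ∧ s j) {c : ℝ} (hc : ∑ i, ∑ j, |N i j| ≤ c) :
    (diagonal (fun i => if s i then c else 0) + N).PosSemidef := by
  refine .of_dotProduct_mulVec_nonneg ?_ fun x => ?_
  · exact (isHermitian_diagonal _).add hN
  set T := ∑ i, if s i then x i ^ 2 else 0
  have hT : 0 ≤ T := sum_nonneg fun i _ => by positivity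
  have hsq : ∀ i, s i → x i ^ 2 ≤ T := fun i hi => by
    simpa [hi] using single_le_sum (f := fun i => if s i then x i ^ 2 else 0)
      (fun j _ => by positivity) (mem_univ i)
  have hentry : ∀ i j, |x i * N i j * x j| ≤ |N i j| * T := fun i j => by
    by_cases hij : N i j = 0
    · simp [hij]
    obtain ⟨hi, hj⟩ := hsupp i j hij
    rw [abs_mul, abs_mul, mul_right_comm, mul_comm]
    refine mul_le_mul_of_nonneg_left ?_ (abs_nonneg _)
    nlinarith [two_mul_le_add_sq |x i| |x j|, sq_abs (x i), sq_abs (x j), hsq i hi, hsq j hj]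
  have hform : star x ⬝ᵥ (diagonal (fun i => if s i then c else 0) + N) *ᵥ x
      = c * T + ∑ i, ∑ j, x i * N i j * x j := by
    rw [add_mulVec, dotProduct_add]
    congr 1
    · simp only [star_trivial, dotProduct, mulVec_diagonal, mul_sum, T]
      exact sum_congr rfl fun i _ => by split_ifs <;> ring
    · simp only [star_trivial, dotProduct, mulVec, mul_sum]
      exact sum_congr rfl fun i _ => sum_congr rfl fun j _ => by ring
  have hbound : |∑ i, ∑ j, x i * N i j * x j| ≤ c * T :=
    calc |∑ i, ∑ j, x i * N i j * x j| ≤ ∑ i, ∑ j, |N i j| * T :=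
          (abs_sum_le_sum_abs _ _).trans <| sum_le_sum fun i _ =>
            (abs_sum_le_sum_abs _ _).trans (sum_le_sum fun j _ => hentry i j)
      _ = (∑ i, ∑ j, |N i j|) * T := by simp only [sum_mul]
      _ ≤ c * T := mul_le_mul_of_nonneg_right hc hT
  rw [hform]
  linarith [neg_abs_le (∑ i, ∑ j, x i * N i j * x j)]

/-- The share of an entry in block `(u, v)` given to the pair `{k, l}` when a symmetric matrix is
split along the pairs `k < l`: an off-diagonal block lies in exactly one pair, a diagonal block in
`p - 1` of them. -/
noncomputable def pairWeight {p : ℕ} (k l u v : Fin p) : ℝ :=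
  if (u = k ∨ u = l) ∧ (v = k ∨ v = l) then (if u = v then ((p : ℝ) - 1)⁻¹ else 1) else 0

lemma pairWeight_comm {p : ℕ} (k l u v : Fin p) : pairWeight k l u v = pairWeight k l v u := by
  unfold pairWeight; grind

lemma pairWeight_eq_zero {p : ℕ} {k l u v : Fin p} (h : ¬((u = k ∨ u = l) ∧ (v = k ∨ v = l))) :
    pairWeight k l u v = 0 :=
  if_neg h

lemma sum_pairWeight_self {p : ℕ} (hp : 2 ≤ p) (u : Fin p) :
    ∑ k, ∑ l ∈ Ioi k, pairWeight k l u u = 1 := by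
  set c : ℝ := ((p : ℝ) - 1)⁻¹
  have hsplit : ∀ k, ∀ l ∈ Ioi k, pairWeight k l u u =
      (if k = u then c else 0) + (if l = u then c else 0) := by
    intro k l hl
    have := (mem_Ioi.mp hl).ne
    unfold pairWeight; split_ifs <;> grind
  have hIoi : ∑ k : Fin p, ∑ l ∈ Ioi k, (if k = u then c else 0) = #(Ioi u) * c := by
    simp
  have hIio : ∑ k : Fin p, ∑ l ∈ Ioi k, (if l = u then c else 0) = #(Iio u) * c := by
    simp only [sum_ite_eq', mem_Ioi, ← sum_filter, sum_const, nsmul_eq_mul, filter_gt_eq_Iio]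
  have hcard : (#(Ioi u) : ℝ) + #(Iio u) = (p : ℝ) - 1 := by
    rw [Fin.card_Ioi, Fin.card_Iio, Nat.cast_sub (by omega), Nat.cast_sub (by omega)]
    push_cast; ring
  rw [sum_congr rfl fun k _ => sum_congr rfl (hsplit k), sum_congr rfl fun k _ => sum_add_distrib,
    sum_add_distrib, hIoi, hIio, ← add_mul, hcard,
    mul_inv_cancel₀ (by linarith [one_le_natCast_sub_one hp])]

lemma sum_pairWeight_of_lt {p : ℕ} {u v : Fin p} (huv : u < v) :
    ∑ k, ∑ l ∈ Ioi k, pairWeight k l u v = 1 := by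
  have hsingle : ∀ k, ∀ l ∈ Ioi k, pairWeight k l u v = if k = u ∧ l = v then 1 else 0 := by
    intro k l hl
    have := mem_Ioi.mp hl
    unfold pairWeight; split_ifs <;> grind
  rw [sum_congr rfl fun k _ => sum_congr rfl (hsingle k),
    sum_eq_single u (fun k _ hk => by simp [hk]) (by simp),
    sum_eq_single v (fun l _ hl => by simp [hl]) (by simp [huv])]
  simp

lemma sum_pairWeight {p : ℕ} (hp : 2 ≤ p) (u v : Fin p) :
    ∑ k, ∑ l ∈ Ioi k, pairWeight k l u v = 1 := by
  rcases lt_trichotomy u v with h | rfl | h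
  · exact sum_pairWeight_of_lt h
  · exact sum_pairWeight_self hp u
  · simpa only [pairWeight_comm _ _ u v] using sum_pairWeight_of_lt h

lemma abs_pairWeight_le_one {p : ℕ} (hp : 2 ≤ p) (k l u v : Fin p) :
    |pairWeight k l u v| ≤ 1 := by
  have := one_le_natCast_sub_one hp
  unfold pairWeight
  split_ifs <;> simp [abs_of_nonneg (by linarith : (0 : ℝ) ≤ p - 1), inv_le_one_of_one_le₀ this]

noncomputable def pairMask {n p : ℕ} (b : Fin n → Fin p) (k l : Fin p) :
    Matrix (Fin n) (Fin n) ℝ :=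
  of fun i j => pairWeight k l (b i) (b j)

lemma sum_pairMask {n p : ℕ} (hp : 2 ≤ p) (b : Fin n → Fin p) :
    ∑ k, ∑ l ∈ Ioi k, pairMask b k l = of 1 := by
  ext i j
  simp [pairMask, Matrix.sum_apply, sum_pairWeight hp]

lemma pairMask_hadamard_one {n p : ℕ} (b : Fin n → Fin p) (k l : Fin p) :
    pairMask b k l ⊙ 1 = diagonal fun i => if b i = k ∨ b i = l then ((p : ℝ) - 1)⁻¹ else 0 := by
  rw [hadamard_one]
  congr 1
  ext i
  simp [pairMask, pairWeight]

lemma isHermitian_pairMask {n p : ℕ} (b : Fin n → Fin p) (k l : Fin p) :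
    (pairMask b k l).IsHermitian :=
  isHermitian_iff_isSymm.mpr <| IsSymm.ext fun _ _ => pairWeight_comm _ _ _ _

lemma memFW_smul_one_add {n p : ℕ} (hp : 2 ≤ p) (b : Fin n → Fin p)
    {S : Matrix (Fin n) (Fin n) ℝ} (hS : S.IsHermitian) {c : ℝ}
    (hc : ((p : ℝ) - 1) * ∑ i, ∑ j, |S i j| ≤ c) :
    memFW b (c • 1 + S) := by
  have hp1 : 0 < (p : ℝ) - 1 := by linarith [one_le_natCast_sub_one hp]
  refine ⟨fun k l => pairMask b k l ⊙ (c • 1 + S), fun k l _ => ?_, fun k l _ i j hij => ?_, ?_⟩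
  · dsimp only
    rw [hadamard_add, hadamard_smul, pairMask_hadamard_one, ← diagonal_smul]
    convert posSemidef_diagonal_add_of_sum_abs_le (fun i => b i = k ∨ b i = l) (c := c / (p - 1))
      ((isHermitian_pairMask b k l).hadamard hS) ?_ ?_ using 3
    · ext i
      simp only [Pi.smul_apply, smul_eq_mul]
      split_ifs <;> simp [div_eq_mul_inv]
    · intro i j hij
      by_contra h
      exact hij (by simp [hadamard_apply, pairMask, pairWeight_eq_zero h])
    · rw [le_div_iff₀' hp1]
      refine le_trans (mul_le_mul_of_nonneg_left (sum_le_sum fun i _ => sum_le_sum fun j _ => ?_)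
        hp1.le) hc
      rw [hadamard_apply, abs_mul]
      exact mul_le_of_le_one_left (abs_nonneg _) (abs_pairWeight_le_one hp _ _ _ _)
  · simp only [hadamard_apply, pairMask, of_apply]
    rw [pairWeight_eq_zero (by tauto), zero_mul]
  · ext i j
    have hmask := congrFun₂ (sum_pairMask hp b) i j
    simp only [Matrix.sum_apply, hadamard_apply, ← sum_mul] at hmask ⊢
    simp [hmask]

lemma trace_mul_smul_add_smul {ι R : Type*} [Fintype ι] [CommRing R] (M X Y : Matrix ι ι R)
    (a c : R) : (M * (a • X + c • Y)).trace = a * (M * X).trace + c * (M * Y).trace := by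
  simp [Matrix.mul_add, trace_add, trace_smul]

lemma exists_mem_Ioo_mul_le_one_sub {a : ℝ} (ha : 0 ≤ a) :
    ∃ t ∈ Set.Ioo (0 : ℝ) 1, t * a ≤ 1 - t := by
  refine ⟨(a + 2)⁻¹, ⟨by positivity, inv_lt_one_of_one_lt₀ (by linarith)⟩, ?_⟩
  rw [← div_eq_inv_mul, div_le_iff₀ (by positivity), sub_mul, inv_mul_cancel₀ (by positivity)]
  nlinarith [inv_pos.mpr (by linarith : (0 : ℝ) < a + 2)]

lemma isUnit_det_of_posDef_transpose_mul_self {ι : Type*} [Fintype ι] [DecidableEq ι]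
    {V : Matrix ι ι ℝ} (h : (Vᵀ * V).PosDef) : IsUnit V.det := by
  have := (isUnit_iff_isUnit_det _).mp h.isUnit
  rw [det_mul] at this
  exact isUnit_of_mul_isUnit_right this

lemma transpose_mul_conj_nonsing_inv_mul {ι K : Type*} [Fintype ι] [DecidableEq ι] [Field K]
    {V : Matrix ι ι K} (hV : IsUnit V.det) (M : Matrix ι ι K) :
    Vᵀ * ((V⁻¹)ᵀ * M * V⁻¹) * V = M := by
  rw [transpose_nonsing_inv, Matrix.mul_assoc, Matrix.mul_assoc, nonsing_inv_mul _ hV,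
    Matrix.mul_one, ← Matrix.mul_assoc, mul_nonsing_inv _ (by rwa [det_transpose]),
    Matrix.one_mul]

theorem inner_approx_strict_decrease_general {n m p : ℕ} (hp : 2 ≤ p) (b : Fin n → Fin p)
    (C : Matrix (Fin n) (Fin n) ℝ) (A : Fin m → Matrix (Fin n) (Fin n) ℝ)
    (g : Fin m → ℝ)
    (Xt Xstar V' : Matrix (Fin n) (Fin n) ℝ)
    (hXt : Xt.PosDef) (hXtfeas : ∀ i : Fin m, (A i * Xt).trace = g i)
    (hXstar : Xstar.PosSemidef) (hXsfeas : ∀ i : Fin m, (A i * Xstar).trace = g i)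
    (hlt : (C * Xstar).trace < (C * Xt).trace)
    (hV' : V'ᵀ * V' = Xt) :
    ∃ lam : ℝ, lam ∈ Set.Ioo (0 : ℝ) 1 ∧
      ((1 - lam) • Xt + lam • Xstar) ∈ Fset b A g V' ∧
      (C * ((1 - lam) • Xt + lam • Xstar)).trace < (C * Xt).trace := by
  have hV : IsUnit V'.det := isUnit_det_of_posDef_transpose_mul_self (hV' ▸ hXt)
  set S := (V'⁻¹)ᵀ * Xstar * V'⁻¹
  have hS : S.PosSemidef := by
    simpa only [conjTranspose_eq_transpose_of_trivial] using
      hXstar.conjTranspose_mul_mul_same V'⁻¹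
  obtain ⟨lam, ⟨hlam0, hlam1⟩, hlamS⟩ := exists_mem_Ioo_mul_le_one_sub
    (mul_nonneg (zero_le_one.trans (one_le_natCast_sub_one hp))
      (sum_nonneg fun i _ => sum_nonneg fun j _ => abs_nonneg (S i j)))
  have hFW : memFW b ((1 - lam) • 1 + lam • S) :=
    memFW_smul_one_add hp b (hS.smul hlam0.le).isHermitian <| by
      simpa [abs_mul, abs_of_pos hlam0, ← mul_sum, mul_left_comm] using hlamS
  refine ⟨lam, ⟨hlam0, hlam1⟩, ⟨fun i => ?_, _, hFW, ?_⟩, ?_⟩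
  · rw [trace_mul_smul_add_smul, hXtfeas, hXsfeas]
    ring
  · rw [Matrix.mul_add, Matrix.add_mul, Matrix.mul_smul, Matrix.smul_mul, Matrix.mul_smul,
      Matrix.smul_mul, Matrix.mul_one, hV', transpose_mul_conj_nonsing_inv_mul hV]
  · rw [trace_mul_smul_add_smul]
    nlinarith

theorem inner_approx_strict_decrease {n m p : ℕ} (hp : 2 ≤ p) (b : Fin n → Fin p)
    (C : Matrix (Fin n) (Fin n) ℝ) (A : Fin m → Matrix (Fin n) (Fin n) ℝ)
    (g : Fin m → ℝ) (hC : C.IsSymm) (hAs : ∀ i, (A i).IsSymm)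
    (Xt Xstar V' : Matrix (Fin n) (Fin n) ℝ)
    (hXt : Xt.PosDef) (hXtfeas : ∀ i : Fin m, (A i * Xt).trace = g i)
    (hXstar : Xstar.PosSemidef) (hXsfeas : ∀ i : Fin m, (A i * Xstar).trace = g i)
    (hlt : (C * Xstar).trace < (C * Xt).trace)
    (hV' : V'ᵀ * V' = Xt) :
    ∃ lam : ℝ, lam ∈ Set.Ioo (0 : ℝ) 1 ∧
      ((1 - lam) • Xt + lam • Xstar) ∈ Fset b A g V' ∧
      (C * ((1 - lam) • Xt + lam • Xstar)).trace < (C * Xt).trace :=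
  inner_approx_strict_decrease_general hp b C A g Xt Xstar V' hXt hXtfeas hXstar hXsfeas hlt hV'
end
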